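/- arXiv:1403.4876 — 2 statements merged into one kernel-verified Lean document; each statement's English description precedes it below -/
import Mathlib

section
/- For any group G, the set O(G) of positive cones of bi-orderings is a closed subset of LO(G) in the product topology on 2^G, and hence compact. -/
/-!
Each instance of a defining condition of a bi-ordering cone constrains only finitely many
values of `χ` (e.g. `χ a`, `χ b`, `χ (a * b)`), so it cuts out a clopen subset of
`G → Bool`. The set of cones is an intersection of such sets, hence closed, and closed
subsets of the compact space `G → Bool` are compact.
-/

theorem isClosed_setOf_comp {ι X Y : Type*} [Finite ι] [TopologicalSpace Y]
    [DiscreteTopology Y] (f : ι → X) (p : (ι → Y) → Prop) :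
    IsClosed {χ : X → Y | p (χ ∘ f)} :=
  (isClosed_discrete {v | p v}).preimage (continuous_pi fun i => continuous_apply (f i))

theorem isClosed_setOf_forall {ι X : Type*} [TopologicalSpace X] {p : ι → X → Prop}
    (h : ∀ i, IsClosed {x | p i x}) : IsClosed {x | ∀ i, p i x} := by
  simpa only [Set.ofPred_forall] using isClosed_iInter h

/-- The space `O(G)` of positive cones of bi-orderings of `G`, viewed inside
`2^G = G → Bool` with the product (Tychonoff) topology, is closed (hence closed in
the subspace `LO(G)`, in which it sits) and compact. -/
theorem O_closed_and_compact (G : Type*) [Group G] :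
    ({χ : G → Bool | (∀ a b : G, χ a = true → χ b = true → χ (a * b) = true) ∧
        (∀ g : G, g = 1 ∨ χ g = true ∨ χ g⁻¹ = true) ∧
        χ 1 = false ∧ (∀ g : G, ¬(χ g = true ∧ χ g⁻¹ = true)) ∧
        (∀ g a : G, χ a = true → χ (g⁻¹ * a * g) = true)} ⊆
      {χ : G → Bool | (∀ a b : G, χ a = true → χ b = true → χ (a * b) = true) ∧
        (∀ g : G, g = 1 ∨ χ g = true ∨ χ g⁻¹ = true) ∧
        χ 1 = false ∧ (∀ g : G, ¬(χ g = true ∧ χ g⁻¹ = true))}) ∧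
    IsClosed {χ : G → Bool | (∀ a b : G, χ a = true → χ b = true → χ (a * b) = true) ∧
        (∀ g : G, g = 1 ∨ χ g = true ∨ χ g⁻¹ = true) ∧
        χ 1 = false ∧ (∀ g : G, ¬(χ g = true ∧ χ g⁻¹ = true)) ∧
        (∀ g a : G, χ a = true → χ (g⁻¹ * a * g) = true)} ∧
    IsCompact {χ : G → Bool | (∀ a b : G, χ a = true → χ b = true → χ (a * b) = true) ∧
        (∀ g : G, g = 1 ∨ χ g = true ∨ χ g⁻¹ = true) ∧
        χ 1 = false ∧ (∀ g : G, ¬(χ g = true ∧ χ g⁻¹ = true)) ∧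
        (∀ g a : G, χ a = true → χ (g⁻¹ * a * g) = true)} := by
  have mul_closed := isClosed_setOf_forall fun a : G => isClosed_setOf_forall fun b : G =>
    isClosed_setOf_comp ![a, b, a * b] fun v : Fin 3 → Bool =>
      v 0 = true → v 1 = true → v 2 = true
  have total := isClosed_setOf_forall fun g : G =>
    isClosed_setOf_comp ![g, g⁻¹] fun v : Fin 2 → Bool => g = 1 ∨ v 0 = true ∨ v 1 = true
  have one_not_pos := isClosed_setOf_comp ![(1 : G)] fun v : Fin 1 → Bool => v 0 = false
  have antisymm := isClosed_setOf_forall fun g : G =>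
    isClosed_setOf_comp ![g, g⁻¹] fun v : Fin 2 → Bool => ¬(v 0 = true ∧ v 1 = true)
  have conj_invariant := isClosed_setOf_forall fun g : G => isClosed_setOf_forall fun a : G =>
    isClosed_setOf_comp ![a, g⁻¹ * a * g] fun v : Fin 2 → Bool => v 0 = true → v 1 = true
  have closed :=
    mul_closed.inter <| total.inter <| one_not_pos.inter <| antisymm.inter conj_invariant
  exact ⟨fun χ hχ => ⟨hχ.1, hχ.2.1, hχ.2.2.1, hχ.2.2.2.1⟩, closed, closed.isCompact⟩
end

section
/- A group G is left-orderable if and only if for every finite subset {x₁,...,xₙ} of G not containing the identity, there exist signs ε_i ∈ {±1} such that the identity is not in the sub-semigroup generated by x₁^{ε₁},...,xₙ^{εₙ}. -/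
def IsLeftInvariant {G : Type*} [Group G] (r : G → G → Prop) : Prop :=
  ∀ f g h : G, r g h → r (f * g) (f * h)

def IsRightInvariant {G : Type*} [Group G] (r : G → G → Prop) : Prop :=
  ∀ f g h : G, r g h → r (g * f) (h * f)

def IsLeftOrderable (G : Type*) [Group G] : Prop :=
  ∃ r : G → G → Prop, IsStrictTotalOrder G r ∧ IsLeftInvariant r

def IsBiOrderable (G : Type*) [Group G] : Prop :=
  ∃ r : G → G → Prop, IsStrictTotalOrder G r ∧ IsLeftInvariant r ∧ IsRightInvariant r

/-- `P` is the positive cone of a left-ordering: a subsemigroup such that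
`G = {1} ⊔ P ⊔ P⁻¹` (disjointly). -/
def IsPositiveCone {G : Type*} [Group G] (P : Set G) : Prop :=
  (∀ a ∈ P, ∀ b ∈ P, a * b ∈ P) ∧
  (∀ g : G, g = 1 ∨ g ∈ P ∨ g⁻¹ ∈ P) ∧
  (1 : G) ∉ P ∧
  (∀ g : G, ¬(g ∈ P ∧ g⁻¹ ∈ P))

/-!
A left-ordering is the same thing as a positive cone `P`, a subsemigroup with
`G = {1} ⊔ P ⊔ P⁻¹`; taking `ε x = 1` exactly for `x ∈ P` keeps every product of the `x ^ ε x`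
inside `P`. Conversely, the condition on a finite set `F` only involves the signs on `F`, so it
cuts out a closed subset of the compact space of sign functions `G → ℤˣ`. These closed sets have
the finite intersection property, so a single sign function works for all finite sets at once,
and the subsemigroup generated by all `x ^ ε x` with `x ≠ 1` is then a positive cone.
-/

theorem isClosed_of_eqOn_finset {X Y : Type*} [TopologicalSpace Y] [DiscreteTopology Y]
    {S : Set (X → Y)} (F : Finset X) (hS : ∀ f g, Set.EqOn f g F → f ∈ S → g ∈ S) :
    IsClosed S := by
  have hS' : S = F.restrict ⁻¹' (F.restrict '' S) := by
    refine (Set.subset_preimage_image _ _).antisymm ?_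
    rintro g ⟨f, hf, hfg⟩
    exact hS f g (fun x hx => congrFun hfg ⟨x, hx⟩) hf
  rw [hS']
  exact (isClosed_discrete _).preimage (Finset.continuous_restrict F)

theorem exists_forall_finset_of_forall_finset {X Y : Type*} [Finite Y]
    (Φ : Finset X → (X → Y) → Prop) (hloc : ∀ (F : Finset X) f g, Set.EqOn f g F → Φ F f → Φ F g)
    (hmono : ∀ {F F'} f, F ⊆ F' → Φ F' f → Φ F f) (h : ∀ F, ∃ f, Φ F f) :
    ∃ f, ∀ F, Φ F f := by
  classical
  let _ : TopologicalSpace Y := ⊥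
  have : DiscreteTopology Y := ⟨rfl⟩
  obtain ⟨f, -, hf⟩ := isCompact_univ.inter_iInter_nonempty (fun F => {f : X → Y | Φ F f})
    (fun F => isClosed_of_eqOn_finset F (hloc F)) fun u => by
      obtain ⟨f, hf⟩ := h (u.sup id)
      exact ⟨f, trivial, Set.mem_iInter₂.mpr fun F hF => hmono f (Finset.le_sup (f := id) hF) hf⟩
  exact ⟨f, Set.mem_iInter.mp hf⟩

section PositiveCone

variable {G : Type*} [Group G] {P : Set G}

theorem IsPositiveCone.isLeftOrderable (hP : IsPositiveCone P) : IsLeftOrderable G := by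
  obtain ⟨hmul, htot, hone, -⟩ := hP
  refine ⟨fun g h => g⁻¹ * h ∈ P, { trichotomous := ?_, irrefl := ?_, trans := ?_ }, ?_⟩
  · intro g h hgh hhg
    rcases htot (g⁻¹ * h) with h1 | hpos | hneg
    · exact inv_mul_eq_one.mp h1
    · exact (hgh hpos).elim
    · exact (hhg (by simpa using hneg)).elim
  · intro g hg
    exact hone (by simpa using hg)
  · intro g h k hgh hhk
    simpa [mul_assoc] using hmul _ hgh _ hhk
  · intro f g h hgh
    simpa [mul_assoc] using hgh

theorem IsLeftOrderable.exists_isPositiveCone (hG : IsLeftOrderable G) :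
    ∃ P : Set G, IsPositiveCone P := by
  obtain ⟨r, hr, hinv⟩ := hG
  refine ⟨{g | r 1 g}, fun a ha b hb => ?_, fun g => ?_, irrefl_of r 1, fun g ⟨hg, hg'⟩ => ?_⟩
  · exact _root_.trans ha (by simpa using hinv a _ _ hb)
  · rcases trichotomous_of r 1 g with h | h | h
    · exact .inr (.inl h)
    · exact .inl h.symm
    · exact .inr (.inr (by simpa using hinv g⁻¹ _ _ h))
  · exact irrefl_of r 1 (_root_.trans (show r 1 g from hg) (by simpa using hinv g _ _ hg'))

theorem Subsemigroup.isPositiveCone {S : Subsemigroup G} (hone : (1 : G) ∉ S)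
    (htot : ∀ g : G, g ≠ 1 → g ∈ S ∨ g⁻¹ ∈ S) : IsPositiveCone (S : Set G) := by
  refine ⟨fun a ha b hb => S.mul_mem ha hb, fun g => ?_, hone, fun g ⟨hg, hg'⟩ => ?_⟩
  · by_cases h : g = 1
    · exact .inl h
    · exact .inr (htot g h)
  · exact hone (by simpa using S.mul_mem hg hg')

def IsPositiveCone.toSubsemigroup (hP : IsPositiveCone P) : Subsemigroup G where
  carrier := P
  mul_mem' ha hb := hP.1 _ ha _ hb

@[simp]
theorem IsPositiveCone.coe_toSubsemigroup (hP : IsPositiveCone P) :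
    (hP.toSubsemigroup : Set G) = P :=
  rfl

end PositiveCone

section Signs

variable {G : Type*} [Group G]

def signedPowers (S : Set G) (ε : G → ℤ) : Set G := {y | ∃ x ∈ S, y = x ^ ε x}

theorem signedPowers_mono {S T : Set G} (hST : S ⊆ T) (ε : G → ℤ) :
    signedPowers S ε ⊆ signedPowers T ε := fun _ ⟨x, hx, hy⟩ => ⟨x, hST hx, hy⟩

theorem signedPowers_congr {S : Set G} {ε ε' : G → ℤ} (h : Set.EqOn ε ε' S) :
    signedPowers S ε = signedPowers S ε' := by
  ext y
  exact exists_congr fun x => and_congr_right fun hx => by rw [h hx]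

theorem exists_finset_of_mem_closure_signedPowers {S : Set G} {ε : G → ℤ} {g : G}
    (hg : g ∈ Subsemigroup.closure (signedPowers S ε)) :
    ∃ F : Finset G, ↑F ⊆ S ∧ g ∈ Subsemigroup.closure (signedPowers F ε) := by
  classical
  induction hg using Subsemigroup.closure_induction with
  | mem y hy =>
    obtain ⟨x, hx, rfl⟩ := hy
    exact ⟨{x}, by simpa using hx, Subsemigroup.subset_closure ⟨x, by simp, rfl⟩⟩
  | mul a b _ _ ha hb =>
    obtain ⟨F₁, hF₁S, ha⟩ := ha
    obtain ⟨F₂, hF₂S, hb⟩ := hb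
    have mono (F : Finset G) (hF : F ⊆ F₁ ∪ F₂) :=
      Subsemigroup.closure_mono (signedPowers_mono (Finset.coe_subset.mpr hF) ε)
    refine ⟨F₁ ∪ F₂, by simp [hF₁S, hF₂S], Subsemigroup.mul_mem _ ?_ ?_⟩
    · exact mono F₁ Finset.subset_union_left ha
    · exact mono F₂ Finset.subset_union_right hb

theorem IsPositiveCone.exists_signs {P : Set G} (hP : IsPositiveCone P) {F : Finset G}
    (hF : (1 : G) ∉ F) : ∃ ε : G → ℤ, (∀ x ∈ F, ε x = 1 ∨ ε x = -1) ∧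
      (1 : G) ∉ Subsemigroup.closure (signedPowers F ε) := by
  classical
  refine ⟨fun x => if x ∈ P then 1 else -1, fun x _ => ?_, fun h1 => ?_⟩
  · dsimp only
    split_ifs <;> simp
  refine hP.2.2.1 (Subsemigroup.closure_le (S := hP.toSubsemigroup) |>.mpr ?_ h1)
  rw [hP.coe_toSubsemigroup]
  rintro _ ⟨x, hxF, rfl⟩
  have hx : x ≠ 1 := fun h => hF (h ▸ hxF)
  dsimp only
  split_ifs with hxP
  · simpa using hxP
  · simpa [hx, hxP] using hP.2.1 x

theorem isLeftOrderable_of_signs (ε : G → ℤ) (hε : ∀ x, ε x = 1 ∨ ε x = -1)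
    (h : (1 : G) ∉ Subsemigroup.closure (signedPowers {x | x ≠ 1} ε)) : IsLeftOrderable G := by
  refine (Subsemigroup.isPositiveCone h fun g hg => ?_).isLeftOrderable
  have hmem : g ^ ε g ∈ Subsemigroup.closure (signedPowers {x | x ≠ 1} ε) :=
    Subsemigroup.subset_closure ⟨g, hg, rfl⟩
  rcases hε g with h1 | h1
  · exact .inl (by simpa [h1] using hmem)
  · exact .inr (by simpa [h1] using hmem)

theorem exists_signs_of_forall_finset
    (h : ∀ F : Finset G, (1 : G) ∉ F → ∃ ε : G → ℤ, (∀ x ∈ F, ε x = 1 ∨ ε x = -1) ∧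
      (1 : G) ∉ Subsemigroup.closure (signedPowers F ε)) :
    ∃ ε : G → ℤ, (∀ x, ε x = 1 ∨ ε x = -1) ∧
      (1 : G) ∉ Subsemigroup.closure (signedPowers {x | x ≠ 1} ε) := by
  classical
  obtain ⟨δ, hδ⟩ := exists_forall_finset_of_forall_finset
    (fun F (ε : G → ℤˣ) => (1 : G) ∉ Subsemigroup.closure (signedPowers (F.erase 1) fun x => ε x))
    (fun F ε ε' hεε' => by
      rw [signedPowers_congr fun x hx => congrArg Units.val (hεε' (Finset.mem_of_mem_erase hx))]
      exact id)
    (fun ε hFF' hε h1 => by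
      refine hε (Subsemigroup.closure_mono (signedPowers_mono ?_ _) h1)
      exact_mod_cast Finset.erase_subset_erase 1 hFF')
    (fun F => by
      obtain ⟨ε, hsign, hε⟩ := h (F.erase 1) (Finset.notMem_erase 1 F)
      refine ⟨fun x => if ε x = 1 then 1 else -1, ?_⟩
      rwa [signedPowers_congr fun x hx => ?_] at hε
      rcases hsign x hx with h1 | h1 <;> simp [h1])
  refine ⟨fun x => δ x, fun x => Int.isUnit_iff.mp (δ x).isUnit, fun h1 => ?_⟩
  obtain ⟨F, hF, h1F⟩ := exists_finset_of_mem_closure_signedPowers h1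
  exact hδ F (by rwa [Finset.erase_eq_of_notMem fun h => hF h rfl])

end Signs

theorem leftOrderable_iff_signs {G : Type*} [Group G] :
    IsLeftOrderable G ↔
      ∀ F : Finset G, (1 : G) ∉ F →
        ∃ ε : G → ℤ, (∀ x ∈ F, ε x = 1 ∨ ε x = -1) ∧
          (1 : G) ∉ Subsemigroup.closure {y : G | ∃ x ∈ F, y = x ^ ε x} := by
  refine ⟨fun hG F hF => ?_, fun h => ?_⟩
  · obtain ⟨P, hP⟩ := hG.exists_isPositiveCone
    exact hP.exists_signs hF
  · obtain ⟨ε, hsign, hε⟩ := exists_signs_of_forall_finset h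
    exact isLeftOrderable_of_signs ε hsign hε
end
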